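/- Let H be a compact quantum group (a compact ∘-Hopf algebra) with normal integral φ. Then the square of the antipode S² is a positive operator with respect to the inner product ⟨x, y⟩ = φ(S(y∘)x); explicitly, ⟨S²(x), x⟩ = ⟨x∘, x∘⟩ > 0 for all x ≠ 0. -/

import Mathlib

/-!
The functional `x ↦ conj φ(x∘)` is a normalized right integral, because `∘` is conjugate linear
and reverses the comultiplication, and a normalized left integral agrees with any normalized right
integral; hence `φ(x∘) = conj φ(x)`. Hermitian symmetry of `⟨·, ·⟩` at `1` then gives `φ ∘ S = φ`,
and since `S` is antimultiplicative,
`⟨S²x, x⟩ = φ(S(x∘) S²x) = φ(S(Sx · x∘)) = φ(Sx · x∘) = ⟨x∘, x∘⟩`, which is positive for `x ≠ 0`.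
-/

open TensorProduct Coalgebra HopfAlgebra

variable {H : Type*} [Ring H] [HopfAlgebra ℂ H]

/-- `φ` is a right integral: `Σ φ(x₁) x₂ = φ(x) 1`. -/
def IsRightIntegral (φ : H →ₗ[ℂ] ℂ) : Prop :=
  ∀ x : H,
    TensorProduct.lid ℂ H ((LinearMap.rTensor H φ) (Coalgebra.comul (R := ℂ) x)) = φ x • 1

/-- `φ` is a left integral: `Σ x₁ φ(x₂) = φ(x) 1`. -/
def IsLeftIntegral (φ : H →ₗ[ℂ] ℂ) : Prop :=
  ∀ x : H,
    TensorProduct.rid ℂ H ((LinearMap.lTensor H φ) (Coalgebra.comul (R := ℂ) x)) = φ x • 1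

/-- The sesquilinear form `⟨x, y⟩ = φ(S(y∘) x)` attached to the integral `φ`. -/
noncomputable def intInner (circ : H → H) (φ : H →ₗ[ℂ] ℂ) (x y : H) : ℂ :=
  φ (antipode (R := ℂ) (circ y) * x)

universe u

-- Needed to feed an arbitrary representation to a hypothesis that quantifies over the index
-- types of one fixed universe.
noncomputable def Coalgebra.Repr.toULiftFin {R A ι : Type*} [CommSemiring R] [AddCommMonoid A]
    [Module R A] [CoalgebraStruct R A] {a : A} (r : Repr R a ι) :
    Repr R a (ULift.{u} (Fin r.index.card)) where
  index := Finset.univ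
  left i := r.left (r.index.equivFin.symm i.down)
  right i := r.right (r.index.equivFin.symm i.down)
  eq := by
    rw [← r.eq, ← Finset.sum_coe_sort r.index]
    exact Fintype.sum_equiv (Equiv.ulift.trans r.index.equivFin.symm) _ _ fun _ => rfl

theorem Function.Involutive.map_one_of_map_mul {M : Type*} [MulOneClass M] {c : M → M}
    (hinv : Function.Involutive c) (hmul : ∀ x y, c (x * y) = c x * c y) : c 1 = 1 :=
  calc c 1 = c 1 * c (c 1) := by rw [hinv, mul_one]
    _ = 1 := by rw [← hmul, one_mul, hinv]

theorem IsLeftIntegral.sum_smul_eq {φ : H →ₗ[ℂ] ℂ} (hl : IsLeftIntegral φ) {x : H} {ι : Type*}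
    (r : Repr ℂ x ι) : ∑ i ∈ r.index, φ (r.right i) • r.left i = φ x • (1 : H) := by
  simpa only [← r.eq, map_sum, LinearMap.lTensor_tmul, TensorProduct.rid_tmul] using hl x

theorem IsLeftIntegral.apply_circ_eq_conj {φ : H →ₗ[ℂ] ℂ} (hl : IsLeftIntegral φ) (hn : φ 1 = 1)
    (c : H →ₗ⋆[ℂ] H) (hinv : ∀ x, c (c x) = x) (hc1 : c 1 = 1)
    (hanti : ∀ (x : H) {ι : Type u} (r : Repr ℂ x ι),
      comul (R := ℂ) (c x) = ∑ i ∈ r.index, c (r.right i) ⊗ₜ[ℂ] c (r.left i))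
    (w : H) : φ (c w) = starRingEnd ℂ (φ w) := by
  let r := (ℛ ℂ w).toULiftFin.{u}
  have h1 := congrArg (φ ∘ₛₗ c) (hl.sum_smul_eq ⟨r.index, _, _, (hanti w r).symm⟩)
  have h2 := congrArg (φ ∘ₛₗ c) (hl.sum_smul_eq r)
  simp only [map_sum, map_smulₛₗ, LinearMap.comp_apply, hinv, hc1, hn, smul_eq_mul,
    mul_one] at h1 h2
  rw [← h2, ← Complex.conj_conj (φ (c w)), ← h1]
  simp only [map_sum, map_mul, Complex.conj_conj]
  exact Finset.sum_congr rfl fun _ _ => mul_comm _ _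

theorem apply_antipode_eq_of_intInner_conj_symm {circ : H → H} {φ : H →ₗ[ℂ] ℂ}
    (hinv : ∀ x, circ (circ x) = x) (hc1 : circ 1 = 1)
    (hstar : ∀ w, φ (circ w) = starRingEnd ℂ (φ w))
    (hherm : ∀ x y : H, intInner circ φ y x = starRingEnd ℂ (intInner circ φ x y)) (w : H) :
    φ (antipode (R := ℂ) w) = φ w := by
  have h := hherm 1 (circ w)
  simp only [intInner, hc1, hinv, antipode_one, one_mul, mul_one, hstar] at h
  exact (RingHom.injective _ h).symm

theorem intInner_antipode_antipode_left {circ : H → H} {φ : H →ₗ[ℂ] ℂ}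
    (hinv : ∀ x, circ (circ x) = x) (hS : ∀ w, φ (antipode (R := ℂ) w) = φ w) (x : H) :
    intInner circ φ (antipode (R := ℂ) (antipode (R := ℂ) x)) x =
      intInner circ φ (circ x) (circ x) := by
  simp only [intInner, hinv, ← antipode_mul_antidistrib, hS]

theorem antipode_sq_positive_general
    (circ : H → H)
    (hcadd : ∀ x y : H, circ (x + y) = circ x + circ y)
    (hcsmul : ∀ (a : ℂ) (x : H), circ (a • x) = (starRingEnd ℂ) a • circ x)
    (hcinvol : ∀ x : H, circ (circ x) = x)
    (hcanti : ∀ (x : H) {ι : Type*} (r : Coalgebra.Repr ℂ x ι),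
      Coalgebra.comul (R := ℂ) (circ x) =
        ∑ i ∈ r.index, circ (r.right i) ⊗ₜ[ℂ] circ (r.left i))
    (hcmul : ∀ x y : H, circ (x * y) = circ x * circ y)
    (φ : H →ₗ[ℂ] ℂ) (hl : IsLeftIntegral φ) (hn : φ 1 = 1)
    (hherm : ∀ x y : H, intInner circ φ y x = (starRingEnd ℂ) (intInner circ φ x y))
    (hpos : ∀ x : H, x ≠ 0 →
      0 < (intInner circ φ x x).re ∧ (intInner circ φ x x).im = 0) :
    ∀ x : H,
      intInner circ φ (antipode (R := ℂ) (antipode (R := ℂ) x)) x =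
        intInner circ φ (circ x) (circ x) ∧
      (x ≠ 0 →
        0 < (intInner circ φ (antipode (R := ℂ) (antipode (R := ℂ) x)) x).re ∧
        (intInner circ φ (antipode (R := ℂ) (antipode (R := ℂ) x)) x).im = 0) := by
  let c : H →ₗ⋆[ℂ] H := ⟨⟨circ, hcadd⟩, hcsmul⟩
  have hc1 : circ 1 = 1 := Function.Involutive.map_one_of_map_mul hcinvol hcmul
  have hstar := hl.apply_circ_eq_conj hn c hcinvol hc1 hcanti
  have hS := apply_antipode_eq_of_intInner_conj_symm hcinvol hc1 hstar hherm
  intro x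
  rw [intInner_antipode_antipode_left hcinvol hS x]
  refine ⟨rfl, fun hx => hpos (circ x) fun h => hx ?_⟩
  rw [← hcinvol x, h]
  exact map_zero c

/-- in a compact quantum group, `S²` is positive with respect to the
inner product given by the integral: `⟨S²(x), x⟩ = ⟨x∘, x∘⟩ > 0` for `x ≠ 0`. -/
theorem antipode_sq_positive
    (circ : H → H)
    (hcadd : ∀ x y : H, circ (x + y) = circ x + circ y)
    (hcsmul : ∀ (a : ℂ) (x : H), circ (a • x) = (starRingEnd ℂ) a • circ x)
    (hcinvol : ∀ x : H, circ (circ x) = x)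
    (hcanti : ∀ (x : H) {ι : Type*} (r : Coalgebra.Repr ℂ x ι),
      Coalgebra.comul (R := ℂ) (circ x) =
        ∑ i ∈ r.index, circ (r.right i) ⊗ₜ[ℂ] circ (r.left i))
    (hcmul : ∀ x y : H, circ (x * y) = circ x * circ y)
    (φ : H →ₗ[ℂ] ℂ) (hr : IsRightIntegral φ) (hl : IsLeftIntegral φ) (hn : φ 1 = 1)
    (hherm : ∀ x y : H, intInner circ φ y x = (starRingEnd ℂ) (intInner circ φ x y))
    (hpos : ∀ x : H, x ≠ 0 →
      0 < (intInner circ φ x x).re ∧ (intInner circ φ x x).im = 0) :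
    ∀ x : H,
      intInner circ φ (antipode (R := ℂ) (antipode (R := ℂ) x)) x =
        intInner circ φ (circ x) (circ x) ∧
      (x ≠ 0 →
        0 < (intInner circ φ (antipode (R := ℂ) (antipode (R := ℂ) x)) x).re ∧
        (intInner circ φ (antipode (R := ℂ) (antipode (R := ℂ) x)) x).im = 0) :=
  antipode_sq_positive_general circ hcadd hcsmul hcinvol hcanti hcmul φ hl hn hherm hpos
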